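/- arXiv:2510.21613 — 2 statements merged into one kernel-verified Lean document; each statement's English description precedes it below -/
import Mathlib

section
/- Let L > 0, let n ≥ 3, and let X be an L-exponentially distributed random vector on ℝ^d. Then Pr[‖X‖ ≥ 2·e·d·L^{−1}·ln n] ≤ n^{−d}. -/
open MeasureTheory ProbabilityTheory

noncomputable section

/-- The Euclidean (ℓ²) norm of a vector in `ℝ^d`. -/
def e2norm {d : ℕ} (x : Fin d → ℝ) : ℝ := Real.sqrt (∑ i, (x i) ^ 2)

/-- A random vector `X : Ω → ℝ^d` is `L`-exponentially distributed if its law has density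
`x ↦ C exp(-L ‖x‖₂)` w.r.t. Lebesgue measure, for some normalizing constant `C`. -/
def IsLExpDistributed {d : ℕ} {Ω : Type*} [MeasurableSpace Ω] (μ : Measure Ω)
    (L : ℝ) (X : Ω → Fin d → ℝ) : Prop :=
  Measurable X ∧ ∃ C : ℝ, μ.map X =
    volume.withDensity fun x => ENNReal.ofReal (C * Real.exp (-L * e2norm x))

/-! A Chernoff-type comparison of densities. On `{R ≤ ‖x‖}` one has
`e^{-L‖x‖} ≤ e^{-(1-θ)LR} e^{-θL‖x‖}`, and rescaling `x ↦ θx` shows that the density with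
rate `θL` has `θ^{-d}` times the mass of the one with rate `L`, so
`Pr[R ≤ ‖X‖] ≤ θ^{-d} e^{-(1-θ)LR}`. With `θ = 1/e` and `R = 2edL⁻¹ ln n` this is
`e^{d - 2(e-1) d ln n} ≤ n^{-d}` as soon as `ln n ≥ 1`. -/

open scoped ENNReal

theorem lintegral_comp_smul_addHaar {E : Type*} [NormedAddCommGroup E] [NormedSpace ℝ E]
    [MeasurableSpace E] [BorelSpace E] [FiniteDimensional ℝ E] (μ : Measure E)
    [μ.IsAddHaarMeasure] {f : E → ℝ≥0∞} (hf : Measurable f) {c : ℝ} (hc : c ≠ 0) :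
    ∫⁻ x, f (c • x) ∂μ = ENNReal.ofReal |(c ^ Module.finrank ℝ E)⁻¹| * ∫⁻ x, f x ∂μ := by
  rw [← lintegral_map hf (measurable_const_smul c), Measure.map_addHaar_smul μ hc,
    lintegral_smul_measure, smul_eq_mul]

theorem lintegral_eq_one_of_map_eq_withDensity {Ω E : Type*} [MeasurableSpace Ω]
    [MeasurableSpace E] {μ : Measure Ω} [IsProbabilityMeasure μ] {ν : Measure E} {X : Ω → E}
    (hX : Measurable X) {f : E → ℝ≥0∞} (hmap : μ.map X = ν.withDensity f) :
    ∫⁻ x, f x ∂ν = 1 := by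
  have : IsProbabilityMeasure (μ.map X) := Measure.isProbabilityMeasure_map hX.aemeasurable
  rw [← setLIntegral_univ, ← withDensity_apply _ MeasurableSet.univ, ← hmap, measure_univ]

namespace e2norm

variable {d : ℕ}

theorem continuous : Continuous (e2norm (d := d)) :=
  Real.continuous_sqrt.comp (continuous_finsetSum _ fun i _ => (continuous_apply i).pow 2)

theorem smul_of_nonneg {c : ℝ} (hc : 0 ≤ c) (x : Fin d → ℝ) :
    e2norm (c • x) = c * e2norm x := by
  simp only [e2norm, Pi.smul_apply, smul_eq_mul, mul_pow, ← Finset.mul_sum,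
    Real.sqrt_mul (sq_nonneg c), Real.sqrt_sq hc]

end e2norm

def expDensity {d : ℕ} (C L : ℝ) (x : Fin d → ℝ) : ℝ≥0∞ :=
  ENNReal.ofReal (C * Real.exp (-L * e2norm x))

namespace expDensity

variable {d : ℕ} {C L : ℝ}

theorem measurable : Measurable (expDensity (d := d) C L) :=
  (measurable_const.mul (e2norm.continuous.measurable.const_mul (-L)).exp).ennreal_ofReal

theorem comp_smul {θ : ℝ} (hθ : 0 ≤ θ) (x : Fin d → ℝ) :
    expDensity C L (θ • x) = expDensity C (θ * L) x := by
  rw [expDensity, expDensity, e2norm.smul_of_nonneg hθ, neg_mul, neg_mul, mul_assoc, mul_left_comm]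

theorem lintegral_mul_rate {θ : ℝ} (hθ : 0 < θ) :
    ∫⁻ x : Fin d → ℝ, expDensity C (θ * L) x =
      ENNReal.ofReal (θ ^ d)⁻¹ * ∫⁻ x : Fin d → ℝ, expDensity C L x := by
  simp_rw [← comp_smul hθ.le]
  rw [lintegral_comp_smul_addHaar volume measurable hθ.ne', Module.finrank_fin_fun,
    abs_of_pos (inv_pos.2 (pow_pos hθ d))]

theorem le_exp_mul_of_le_e2norm {θ R : ℝ} (hθ : θ ≤ 1) (hL : 0 ≤ L) {x : Fin d → ℝ}
    (hx : R ≤ e2norm x) :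
    expDensity C L x ≤
      ENNReal.ofReal (Real.exp (-((1 - θ) * L * R))) * expDensity C (θ * L) x := by
  rw [expDensity, expDensity, ENNReal.ofReal_mul' (Real.exp_pos _).le,
    ENNReal.ofReal_mul' (Real.exp_pos _).le, mul_left_comm,
    ← ENNReal.ofReal_mul (Real.exp_pos _).le, ← Real.exp_add]
  gcongr
  nlinarith [mul_nonneg (sub_nonneg.2 hθ) hL]

end expDensity

theorem IsLExpDistributed.measure_le_e2norm_le {d : ℕ} {Ω : Type*} [MeasurableSpace Ω]
    {μ : Measure Ω} [IsProbabilityMeasure μ] {L : ℝ} (hL : 0 ≤ L) {X : Ω → Fin d → ℝ}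
    (hX : IsLExpDistributed μ L X) {θ : ℝ} (hθ₀ : 0 < θ) (hθ₁ : θ ≤ 1) (R : ℝ) :
    μ {ω | R ≤ e2norm (X ω)} ≤
      ENNReal.ofReal (Real.exp (-((1 - θ) * L * R))) * ENNReal.ofReal (θ ^ d)⁻¹ := by
  obtain ⟨hXm, C, hmap⟩ := hX
  change μ.map X = volume.withDensity (expDensity C L) at hmap
  have hS : MeasurableSet {x : Fin d → ℝ | R ≤ e2norm x} :=
    measurableSet_le measurable_const e2norm.continuous.measurable
  calc μ {ω | R ≤ e2norm (X ω)}
      = ∫⁻ x in {x | R ≤ e2norm x}, expDensity C L x := by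
        rw [show {ω | R ≤ e2norm (X ω)} = X ⁻¹' {x | R ≤ e2norm x} from rfl,
          ← Measure.map_apply hXm hS, hmap, withDensity_apply _ hS]
    _ ≤ ∫⁻ x in {x | R ≤ e2norm x},
          ENNReal.ofReal (Real.exp (-((1 - θ) * L * R))) * expDensity C (θ * L) x :=
        setLIntegral_mono (measurable_const.mul expDensity.measurable)
          fun x hx => expDensity.le_exp_mul_of_le_e2norm hθ₁ hL hx
    _ ≤ ENNReal.ofReal (Real.exp (-((1 - θ) * L * R))) * ∫⁻ x, expDensity C (θ * L) x := by
        rw [← lintegral_const_mul _ expDensity.measurable]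
        exact setLIntegral_le_lintegral _ _
    _ = ENNReal.ofReal (Real.exp (-((1 - θ) * L * R))) * ENNReal.ofReal (θ ^ d)⁻¹ := by
        rw [expDensity.lintegral_mul_rate hθ₀, lintegral_eq_one_of_map_eq_withDensity hXm hmap,
          mul_one]

theorem one_le_two_mul_exp_one_sub_three_mul_log {n : ℕ} (hn : 3 ≤ n) :
    1 ≤ (2 * Real.exp 1 - 3) * Real.log n := by
  have he : 2 < Real.exp 1 := by linarith [Real.exp_one_gt_d9]
  have hlog : 1 ≤ Real.log n := by
    rw [Real.le_log_iff_exp_le (by positivity)]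
    linarith [Real.exp_one_lt_d9, (Nat.ofNat_le_cast.2 hn : (3 : ℝ) ≤ n)]
  nlinarith

/-- if `X` is `L`-exponentially distributed on `ℝ^d` and `n ≥ 3`, then
`Pr[‖X‖ ≥ 2 e d L⁻¹ ln n] ≤ n^{-d}`. -/
theorem stmt5 {d : ℕ} {Ω : Type*} [MeasurableSpace Ω] (μ : Measure Ω)
    [IsProbabilityMeasure μ] (L : ℝ) (hL : 0 < L) (n : ℕ) (hn : 3 ≤ n)
    (X : Ω → Fin d → ℝ) (hX : IsLExpDistributed μ L X) :
    (μ {ω | 2 * Real.exp 1 * d * L⁻¹ * Real.log n ≤ e2norm (X ω)}).toReal ≤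
      ((n : ℝ) ^ d)⁻¹ := by
  set R := 2 * Real.exp 1 * d * L⁻¹ * Real.log n
  have htail := hX.measure_le_e2norm_le hL.le (Real.exp_pos (-1)) (by simp) R
  rw [← ENNReal.ofReal_mul (Real.exp_pos _).le] at htail
  refine ENNReal.toReal_le_of_le_ofReal (by positivity) (htail.trans (ENNReal.ofReal_le_ofReal ?_))
  have hexponent : (1 - Real.exp (-1)) * L * R = 2 * (Real.exp 1 - 1) * d * Real.log n := by
    simp only [R, Real.exp_neg]
    field_simp
  have hn₀ : (0 : ℝ) < n := by positivity
  rw [← Real.exp_nat_mul, ← Real.rpow_natCast, ← Real.exp_log hn₀, ← Real.exp_mul,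
    ← Real.exp_neg, ← Real.exp_neg, ← Real.exp_add, hexponent]
  gcongr
  nlinarith [mul_le_mul_of_nonneg_left (one_le_two_mul_exp_one_sub_three_mul_log hn)
    (Nat.cast_nonneg d : (0 : ℝ) ≤ d)]

end
end

section
/- Let U be a fixed finite set and let R ⊆ V ⊆ U be random sets satisfying E[|R|] ≥ p·E[|V|] for some p > 1/2, and let P = (V,E) be a (random) path graph with vertex set V. Then E[|V|] ≤ (E[|E[R,R]|] + 1) / (2p − 1). -/
open MeasureTheory ProbabilityTheory

noncomputable section

lemma key_comb (m : ℕ) (S : Finset ℕ) (hS : S ⊆ Finset.range m) :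
    2 * S.card ≤
      ((Finset.range (m - 1)).filter (fun i => i ∈ S ∧ i + 1 ∈ S)).card + (m + 1) := by
  classical
  set S' := S.image (· + 1) with hS'
  have hinj : Function.Injective (· + 1 : ℕ → ℕ) := fun a b h => by simpa using h
  have hcardS' : S'.card = S.card := Finset.card_image_of_injective _ hinj
  have hsub : S ∪ S' ⊆ Finset.range (m + 1) := by
    intro j hj
    simp only [Finset.mem_union, hS', Finset.mem_image] at hj
    rcases hj with h | ⟨i, hi, rfl⟩
    · have := Finset.mem_range.1 (hS h); exact Finset.mem_range.2 (by omega)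
    · have := Finset.mem_range.1 (hS hi); exact Finset.mem_range.2 (by omega)
  have hinter : S ∩ S' =
      ((Finset.range (m - 1)).filter (fun i => i ∈ S ∧ i + 1 ∈ S)).image (· + 1) := by
    ext j
    simp only [Finset.mem_inter, hS', Finset.mem_image, Finset.mem_filter, Finset.mem_range]
    constructor
    · rintro ⟨hjS, i, hiS, rfl⟩
      have := Finset.mem_range.1 (hS hjS)
      exact ⟨i, ⟨by omega, hiS, hjS⟩, rfl⟩
    · rintro ⟨i, ⟨hi, hiS, hi1S⟩, rfl⟩
      exact ⟨hi1S, i, hiS, rfl⟩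
  have h1 : (S ∪ S').card + (S ∩ S').card = S.card + S'.card :=
    Finset.card_union_add_card_inter _ _
  have h2 : (S ∪ S').card ≤ m + 1 := by
    simpa using Finset.card_le_card hsub
  have h3 : (S ∩ S').card =
      ((Finset.range (m - 1)).filter (fun i => i ∈ S ∧ i + 1 ∈ S)).card := by
    rw [hinter, Finset.card_image_of_injective _ hinj]
  omega

/-- Let `R ⊆ V ⊆ U` be random finite sets with `E[|R|] ≥ p E[|V|]` for some
`p > 1/2`, and for each sample point let the path graph on `V` be given by an enumeration
`e ω : 0,1,…,|V ω|-1 → V ω` (a bijection onto `V ω`), with edges `{e ω i, e ω (i+1)}`.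
Then `E[|V|] ≤ (E[|E[R,R]|] + 1)/(2p - 1)`. -/
theorem stmt10 {U : Type*} [Fintype U] [DecidableEq U] {Ω : Type*}
    [MeasurableSpace Ω] (μ : Measure Ω) [IsProbabilityMeasure μ]
    (R V : Ω → Finset U) (e : Ω → ℕ → U) (p : ℝ) (hp : 1 / 2 < p)
    (hRV : ∀ ω, R ω ⊆ V ω)
    (hpath : ∀ ω, Set.BijOn (e ω) (Set.Iio ((V ω).card)) (V ω : Set U))
    (hmeasV : Measurable fun ω => ((V ω).card : ℝ))
    (hmeasR : Measurable fun ω => ((R ω).card : ℝ))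
    (hmeasRR : Measurable fun ω =>
      ((((Finset.range ((V ω).card - 1)).filter
        fun i => e ω i ∈ R ω ∧ e ω (i + 1) ∈ R ω)).card : ℝ))
    (hExp : p * ∫ ω, ((V ω).card : ℝ) ∂μ ≤ ∫ ω, ((R ω).card : ℝ) ∂μ) :
    ∫ ω, ((V ω).card : ℝ) ∂μ ≤
      ((∫ ω, ((((Finset.range ((V ω).card - 1)).filter
          fun i => e ω i ∈ R ω ∧ e ω (i + 1) ∈ R ω)).card : ℝ) ∂μ) + 1)
        / (2 * p - 1) := by
  classical
  set fV : Ω → ℝ := fun ω => ((V ω).card : ℝ) with hfV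
  set fR : Ω → ℝ := fun ω => ((R ω).card : ℝ) with hfR
  set fF : Ω → ℝ := fun ω =>
    ((((Finset.range ((V ω).card - 1)).filter
      fun i => e ω i ∈ R ω ∧ e ω (i + 1) ∈ R ω)).card : ℝ) with hfF
  -- pointwise bound : 2 * |R ω| ≤ fF ω + |V ω| + 1
  have hpt : ∀ ω, 2 * fR ω ≤ fF ω + fV ω + 1 := by
    intro ω
    set m := (V ω).card with hm
    set S : Finset ℕ := (Finset.range m).filter (fun i => e ω i ∈ R ω) with hSdef
    have hSsub : S ⊆ Finset.range m := Finset.filter_subset _ _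
    -- |S| = |R ω|
    have hinjOn : Set.InjOn (e ω) (Set.Iio m) := (hpath ω).injOn
    have himg : S.image (e ω) = R ω := by
      ext x
      simp only [Finset.mem_image, hSdef, Finset.mem_filter, Finset.mem_range]
      constructor
      · rintro ⟨i, ⟨hi, hiR⟩, rfl⟩; exact hiR
      · intro hx
        have hxV : x ∈ (V ω : Set U) := hRV ω hx
        obtain ⟨i, hi, rfl⟩ := (hpath ω).surjOn hxV
        exact ⟨i, ⟨hi, hx⟩, rfl⟩
    have hcardS : S.card = (R ω).card := by
      rw [← himg]
      exact (Finset.card_image_of_injOn (fun a ha b hb hab =>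
        hinjOn (Set.mem_Iio.2 (Finset.mem_range.1 (hSsub ha)))
          (Set.mem_Iio.2 (Finset.mem_range.1 (hSsub hb))) hab)).symm
    -- the filter sets coincide
    have hFeq : (Finset.range (m - 1)).filter
        (fun i => e ω i ∈ R ω ∧ e ω (i + 1) ∈ R ω) =
        (Finset.range (m - 1)).filter (fun i => i ∈ S ∧ i + 1 ∈ S) := by
      apply Finset.filter_congr
      intro i hi
      have him : i < m - 1 := Finset.mem_range.1 hi
      simp only [hSdef, Finset.mem_filter, Finset.mem_range]
      constructor
      · rintro ⟨h1, h2⟩; exact ⟨⟨by omega, h1⟩, ⟨by omega, h2⟩⟩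
      · rintro ⟨⟨_, h1⟩, ⟨_, h2⟩⟩; exact ⟨h1, h2⟩
    have hnat : 2 * (R ω).card ≤
        ((Finset.range (m - 1)).filter
          (fun i => e ω i ∈ R ω ∧ e ω (i + 1) ∈ R ω)).card + (m + 1) := by
      rw [hFeq, ← hcardS]
      exact key_comb m S hSsub
    have := (Nat.cast_le (α := ℝ)).2 hnat
    push_cast at this
    simp only [hfR, hfF, hfV]
    linarith
  -- integrability
  have hbV : ∀ ω, ‖fV ω‖ ≤ (Fintype.card U : ℝ) := by
    intro ω
    simp only [hfV, Real.norm_eq_abs, abs_of_nonneg (by positivity : (0:ℝ) ≤ ((V ω).card : ℝ))]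
    exact_mod_cast Finset.card_le_univ (V ω)
  have hbR : ∀ ω, ‖fR ω‖ ≤ (Fintype.card U : ℝ) := by
    intro ω
    simp only [hfR, Real.norm_eq_abs, abs_of_nonneg (by positivity : (0:ℝ) ≤ ((R ω).card : ℝ))]
    exact_mod_cast (Finset.card_le_univ (R ω))
  have hbF : ∀ ω, ‖fF ω‖ ≤ (Fintype.card U : ℝ) := by
    intro ω
    simp only [hfF, Real.norm_eq_abs, abs_of_nonneg (by positivity : (0:ℝ) ≤ _)]
    have h1 : ((Finset.range ((V ω).card - 1)).filter
        fun i => e ω i ∈ R ω ∧ e ω (i + 1) ∈ R ω).card ≤ (V ω).card - 1 := by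
      calc _ ≤ (Finset.range ((V ω).card - 1)).card := Finset.card_filter_le _ _
        _ = (V ω).card - 1 := Finset.card_range _
    have h2 : (V ω).card ≤ Fintype.card U := Finset.card_le_univ (V ω)
    exact_mod_cast le_trans h1 (by omega)
  have intV : Integrable fV μ :=
    ⟨hmeasV.aestronglyMeasurable, HasFiniteIntegral.of_bounded (ae_of_all _ hbV)⟩
  have intR : Integrable fR μ :=
    ⟨hmeasR.aestronglyMeasurable, HasFiniteIntegral.of_bounded (ae_of_all _ hbR)⟩
  have intF : Integrable fF μ :=
    ⟨hmeasRR.aestronglyMeasurable, HasFiniteIntegral.of_bounded (ae_of_all _ hbF)⟩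
  -- integrate the pointwise inequality
  have hintle : ∫ ω, 2 * fR ω ∂μ ≤ ∫ ω, (fF ω + fV ω + 1) ∂μ := by
    apply integral_mono (intR.const_mul 2) (by exact (intF.add intV).add (integrable_const 1)) hpt
  have hL : ∫ ω, 2 * fR ω ∂μ = 2 * ∫ ω, fR ω ∂μ := integral_const_mul 2 fR
  have hRhs : ∫ ω, (fF ω + fV ω + 1) ∂μ = (∫ ω, fF ω ∂μ) + (∫ ω, fV ω ∂μ) + 1 := by
    rw [integral_add (show Integrable (fun ω => fF ω + fV ω) μ from intF.add intV) (integrable_const 1),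
      integral_add intF intV]
    simp [measure_univ]
  rw [hL, hRhs] at hintle
  have hp' : (0:ℝ) < 2 * p - 1 := by linarith
  rw [le_div_iff₀ hp']
  have hExp' : p * ∫ ω, fV ω ∂μ ≤ ∫ ω, fR ω ∂μ := hExp
  nlinarith [hExp', hintle]

end
end
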